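/- The isomorphism class (in the arrow category) of the restriction Φ_{[1,3]}: I[1,3]^{m} → I[1,3]^{m'} of a morphism Φ between direct sums of interval representations of A_3(bf) is independent of the choice of indecomposable decompositions: if Φ = R Ψ C for isomorphisms R, C, then Φ_{[1,3]} = R_{[1,3]} Ψ_{[1,3]} C_{[1,3]} with R_{[1,3]}, C_{[1,3]} isomorphisms. -/

import Mathlib

/-- The ambient space of the direct sum `⊕_{(a,b)} I[a,b]^{m (a,b)}` of interval
representations: one copy of `K^{m p}` for each pair `p = (a,b)`. -/
abbrev IntSum (K : Type) [Field K] (m : ℕ × ℕ → ℕ) := ∀ p : ℕ × ℕ, Fin (m p) → K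

/-- Projection of the ambient space onto the part supported at vertex `v`: it keeps the
component of `I[a,b]` exactly when `[a,b]` is a valid interval of the `A_n` quiver
(`1 ≤ a ≤ b ≤ n`) containing `v`.  The vertex-`v` space of the direct-sum representation
is the image of `trunc`, and for an arrow between vertices `i` and `i+1` the structure
map of the representation is (the restriction of) `trunc (i+1) ∘ trunc i`, keeping exactly
the intervals containing both endpoints. -/
def trunc (K : Type) [Field K] (n : ℕ) (m : ℕ × ℕ → ℕ) (v : ℕ) :
    IntSum K m →ₗ[K] IntSum K m :=
  LinearMap.pi fun p =>
    if 1 ≤ p.1 ∧ p.1 ≤ v ∧ v ≤ p.2 ∧ p.2 ≤ n then LinearMap.proj p else 0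

/-- A morphism of representations of the `A_n` quiver with orientation `τ`
(`τ i = true` meaning the `i`-th arrow points forward `i → i+1`) between the direct sums
of interval representations with multiplicities `m` and `m'`: a family of linear maps
`θ v` (one for each vertex), supported on the vertex spaces, commuting with the structure
maps of the two representations. -/
structure RepMor (K : Type) [Field K] (n : ℕ) (τ : ℕ → Bool) (m m' : ℕ × ℕ → ℕ) where
  θ : ℕ → IntSum K m →ₗ[K] IntSum K m'
  supp : ∀ v, trunc K n m' v ∘ₗ θ v ∘ₗ trunc K n m v = θ v
  commF : ∀ i, 1 ≤ i → i < n → τ i = true →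
    θ (i + 1) ∘ₗ trunc K n m (i + 1) ∘ₗ trunc K n m i =
      trunc K n m' (i + 1) ∘ₗ θ i ∘ₗ trunc K n m i
  commB : ∀ i, 1 ≤ i → i < n → τ i = false →
    θ i ∘ₗ trunc K n m i ∘ₗ trunc K n m (i + 1) =
      trunc K n m' i ∘ₗ θ (i + 1) ∘ₗ trunc K n m (i + 1)

/-- The diagonal block of a morphism at the interval `I[p.1, p.2]` and vertex `v`:
the composition (projection onto the `I[a,b]`-isotypic summand) ∘ (the morphism) ∘
(inclusion of the `I[a,b]`-isotypic summand). -/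
def blk {K : Type} [Field K] {n : ℕ} {τ : ℕ → Bool} {m m' : ℕ × ℕ → ℕ}
    (Θ : RepMor K n τ m m') (p : ℕ × ℕ) (v : ℕ) :
    (Fin (m p) → K) →ₗ[K] (Fin (m' p) → K) :=
  LinearMap.proj p ∘ₗ Θ.θ v ∘ₗ LinearMap.single K (fun p => Fin (m p) → K) p

/-- The orientation `bf` of the `A₃` quiver: arrow 1 backward (`2 → 1`), arrow 2 forward
(`2 → 3`). -/
def tauBF : ℕ → Bool := fun i => i == 2

/-!
For the orientation `bf` the middle vertex is a source, and `I[1,3]` is its projective cover.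
Hence a nonzero map `I[1,3] → I[a,b]` forces `2 ∈ [a,b]`, while among the intervals containing
`2` only `[1,3]` itself maps nontrivially into `I[1,3]`: an interval missing an endpoint `w`
of `[1,3]` is killed by the structure map towards `w`, which is injective on `I[1,3]`.
So in `(A ∘ B)_{[1,3]} = ∑_q A_{[1,3],q} ∘ B_{q,[1,3]}` only `q = [1,3]` survives, i.e. the
`[1,3]`-block is functorial, and the theorem follows by applying this to `Φ = R ∘ Ψ ∘ C` and
to the identities `R ∘ Rinv`, `Rinv ∘ R`, `C ∘ Cinv`, `Cinv ∘ C`.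
-/

abbrev intervalMem (n : ℕ) (q : ℕ × ℕ) (v : ℕ) : Prop :=
  1 ≤ q.1 ∧ q.1 ≤ v ∧ v ≤ q.2 ∧ q.2 ≤ n

section Trunc
variable {K : Type} [Field K] {n : ℕ} {m : ℕ × ℕ → ℕ}

lemma trunc_apply (v : ℕ) (x : IntSum K m) (p : ℕ × ℕ) :
    trunc K n m v x p = if intervalMem n p v then x p else 0 := by
  unfold trunc
  split_ifs <;> simp [*]

lemma trunc_trunc (v : ℕ) (x : IntSum K m) :
    trunc K n m v (trunc K n m v x) = trunc K n m v x := by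
  funext p
  simp only [trunc_apply]
  split_ifs <;> rfl

lemma trunc_single_of_mem {v : ℕ} {q : ℕ × ℕ} (h : intervalMem n q v) (x : Fin (m q) → K) :
    trunc K n m v (Pi.single q x) = Pi.single q x := by
  funext p
  rw [trunc_apply]
  by_cases hp : p = q
  · subst hp; rw [if_pos h]
  · simp [hp]

lemma trunc_single_of_not_mem {v : ℕ} {q : ℕ × ℕ} (h : ¬intervalMem n q v)
    (x : Fin (m q) → K) : trunc K n m v (Pi.single q x) = 0 := by
  funext p
  rw [trunc_apply]
  by_cases hp : p = q
  · subst hp; rw [if_neg h]; rfl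
  · simp [hp]

lemma eq_sum_single_of_trunc_eq {v : ℕ} {y : IntSum K m} (h : trunc K n m v y = y) :
    y = ∑ q ∈ Finset.Icc 1 n ×ˢ Finset.Icc 1 n, Pi.single q (y q) := by
  funext p
  rw [Finset.sum_apply, Finset.sum_pi_single]
  split_ifs with hp
  · rfl
  · rw [← h, trunc_apply, if_neg]
    simp only [Finset.mem_product, Finset.mem_Icc] at hp
    omega

end Trunc

namespace RepMor
variable {K : Type} [Field K] {n : ℕ} {τ : ℕ → Bool} {m m' m'' : ℕ × ℕ → ℕ}

lemma trunc_θ_apply (Θ : RepMor K n τ m m') (v : ℕ) (x : IntSum K m) :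
    trunc K n m' v (Θ.θ v x) = Θ.θ v x := by
  rw [← Θ.supp v, LinearMap.comp_apply, trunc_trunc]

lemma θ_trunc_apply (Θ : RepMor K n τ m m') (v : ℕ) (x : IntSum K m) :
    Θ.θ v (trunc K n m v x) = Θ.θ v x := by
  rw [← Θ.supp v]
  simp only [LinearMap.comp_apply, trunc_trunc]

lemma θ_apply_of_not_mem (Θ : RepMor K n τ m m') {v : ℕ} {q : ℕ × ℕ}
    (h : ¬intervalMem n q v) (x : IntSum K m) : Θ.θ v x q = 0 := by
  rw [← Θ.trunc_θ_apply, trunc_apply, if_neg h]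

def comp (A : RepMor K n τ m' m'') (B : RepMor K n τ m m') : RepMor K n τ m m'' where
  θ v := A.θ v ∘ₗ B.θ v
  supp v := LinearMap.ext fun x => by
    simp only [LinearMap.comp_apply, A.trunc_θ_apply, B.θ_trunc_apply]
  commF i h1 h2 ht := LinearMap.ext fun x => by
    have hB := LinearMap.congr_fun (B.commF i h1 h2 ht) x
    have hA := LinearMap.congr_fun (A.commF i h1 h2 ht) (B.θ i (trunc K n m i x))
    simp only [LinearMap.comp_apply, B.trunc_θ_apply] at hA hB ⊢
    rw [hB, hA]
  commB i h1 h2 ht := LinearMap.ext fun x => by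
    have hB := LinearMap.congr_fun (B.commB i h1 h2 ht) x
    have hA := LinearMap.congr_fun (A.commB i h1 h2 ht) (B.θ (i + 1) (trunc K n m (i + 1) x))
    simp only [LinearMap.comp_apply, B.trunc_θ_apply] at hA hB ⊢
    rw [hB, hA]

@[simp] lemma comp_θ (A : RepMor K n τ m' m'') (B : RepMor K n τ m m') (v : ℕ) :
    (A.comp B).θ v = A.θ v ∘ₗ B.θ v := rfl

end RepMor

section Blocks
variable {K : Type} [Field K] {n : ℕ} {τ : ℕ → Bool} {m m' : ℕ × ℕ → ℕ}

lemma blk_apply (Θ : RepMor K n τ m m') (p : ℕ × ℕ) (v : ℕ) (x : Fin (m p) → K) :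
    blk Θ p v x = Θ.θ v (Pi.single p x) p := by
  simp [blk, LinearMap.coe_single]

lemma blk_eq_id_of_θ_eq_trunc (Θ : RepMor K n τ m m) {p : ℕ × ℕ} {v : ℕ}
    (h : Θ.θ v = trunc K n m v) (hp : intervalMem n p v) : blk Θ p v = LinearMap.id :=
  LinearMap.ext fun x => by
    rw [blk_apply, h, trunc_single_of_mem hp, Pi.single_eq_same, LinearMap.id_apply]

end Blocks

namespace RepMor
variable {K : Type} [Field K] {m m' : ℕ × ℕ → ℕ} (Θ : RepMor K 3 tauBF m m')

/-- Both arrows of `bf` start at the source `2`. -/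
lemma trunc_θ_two_single {w : ℕ} {q : ℕ × ℕ} (hw : w = 1 ∨ w = 3) (hq : intervalMem 3 q 2)
    (x : Fin (m q) → K) :
    trunc K 3 m' w (Θ.θ 2 (Pi.single q x)) = Θ.θ w (trunc K 3 m w (Pi.single q x)) := by
  rcases hw with rfl | rfl
  · have h := LinearMap.congr_fun (Θ.commB 1 le_rfl (by norm_num) rfl) (Pi.single q x)
    simp only [LinearMap.comp_apply, trunc_single_of_mem hq] at h
    exact h.symm
  · have h := LinearMap.congr_fun (Θ.commF 2 (by norm_num) (by norm_num) rfl) (Pi.single q x)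
    simp only [LinearMap.comp_apply, trunc_single_of_mem hq] at h
    exact h.symm

lemma θ_single_eq_trunc_θ_two {v : ℕ} {q : ℕ × ℕ} (hv : v = 1 ∨ v = 3)
    (hqv : intervalMem 3 q v) (hq : intervalMem 3 q 2) (x : Fin (m q) → K) :
    Θ.θ v (Pi.single q x) = trunc K 3 m' v (Θ.θ 2 (Pi.single q x)) := by
  rw [Θ.trunc_θ_two_single hv hq, trunc_single_of_mem hqv]

lemma θ_single_apply_one_three {v : ℕ} {q : ℕ × ℕ} (hqv : intervalMem 3 q v)
    (hq : intervalMem 3 q 2) (hq13 : q ≠ (1, 3)) (x : Fin (m q) → K) :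
    Θ.θ v (Pi.single q x) (1, 3) = 0 := by
  obtain ⟨w, hw, hqw⟩ : ∃ w, (w = 1 ∨ w = 3) ∧ ¬intervalMem 3 q w := by
    obtain ⟨a, b⟩ := q
    by_cases ha : a = 1
    · exact ⟨3, Or.inr rfl, fun h => hq13 (Prod.ext ha (by simp at hq h ⊢; omega))⟩
    · exact ⟨1, Or.inl rfl, by simp at hq ⊢; omega⟩
  have h2 : Θ.θ 2 (Pi.single q x) (1, 3) = 0 := by
    have h := congrFun (Θ.trunc_θ_two_single hw hq x) (1, 3)
    rwa [trunc_single_of_not_mem hqw, map_zero, trunc_apply, if_pos (by omega)] at h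
  rcases (by omega : v = 2 ∨ v = 1 ∨ v = 3) with rfl | hv
  · exact h2
  · rw [Θ.θ_single_eq_trunc_θ_two hv hqv hq, trunc_apply, if_pos (by omega), h2]

lemma θ_single_one_three_apply {v : ℕ} {q : ℕ × ℕ} (hv : v = 1 ∨ v = 3)
    (hq : ¬intervalMem 3 q 2) (x : Fin (m (1, 3)) → K) :
    Θ.θ v (Pi.single (1, 3) x) q = 0 := by
  rw [Θ.θ_single_eq_trunc_θ_two hv (by omega) (by decide), trunc_apply,
    Θ.θ_apply_of_not_mem hq, ite_self]

end RepMor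

section BlockOneThree
variable {K : Type} [Field K] {m m' m'' : ℕ × ℕ → ℕ} {v : ℕ}

theorem blk_comp_one_three (A : RepMor K 3 tauBF m' m'') (B : RepMor K 3 tauBF m m')
    (hv : intervalMem 3 (1, 3) v) :
    blk (A.comp B) (1, 3) v = blk A (1, 3) v ∘ₗ blk B (1, 3) v := by
  refine LinearMap.ext fun x => ?_
  simp only [LinearMap.comp_apply, blk_apply, RepMor.comp_θ]
  conv_lhs => rw [eq_sum_single_of_trunc_eq (B.trunc_θ_apply v (Pi.single (1, 3) x))]
  rw [map_sum, Finset.sum_apply, Finset.sum_eq_single (1, 3)]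
  · intro q _ hq13
    by_cases hqv : intervalMem 3 q v
    · by_cases hq2 : intervalMem 3 q 2
      · exact A.θ_single_apply_one_three hqv hq2 hq13 _
      · rw [B.θ_single_one_three_apply (by omega) hq2, Pi.single_zero, map_zero, Pi.zero_apply]
    · rw [B.θ_apply_of_not_mem hqv, Pi.single_zero, map_zero, Pi.zero_apply]
  · intro h
    exact absurd (by decide) h

theorem blk_one_three_bijective (A : RepMor K 3 tauBF m m') (B : RepMor K 3 tauBF m' m)
    (hBA : B.θ v ∘ₗ A.θ v = trunc K 3 m v) (hAB : A.θ v ∘ₗ B.θ v = trunc K 3 m' v)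
    (hv : intervalMem 3 (1, 3) v) : Function.Bijective (blk A (1, 3) v) := by
  have hBA' : blk B (1, 3) v ∘ₗ blk A (1, 3) v = LinearMap.id := by
    rw [← blk_comp_one_three B A hv]; exact blk_eq_id_of_θ_eq_trunc _ hBA hv
  have hAB' : blk A (1, 3) v ∘ₗ blk B (1, 3) v = LinearMap.id := by
    rw [← blk_comp_one_three A B hv]; exact blk_eq_id_of_θ_eq_trunc _ hAB hv
  exact Function.bijective_iff_has_inverse.mpr
    ⟨blk B (1, 3) v, LinearMap.congr_fun hBA', LinearMap.congr_fun hAB'⟩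

end BlockOneThree

/-- The isomorphism class (in the arrow category) of the `I[1,3]`-diagonal
block of a morphism `Φ` between direct sums of interval representations of `A₃(bf)` is
independent of the choice of indecomposable decompositions: if `Φ = R ∘ Ψ ∘ C` with `R`, `C`
isomorphisms (having two-sided inverses `Rinv`, `Cinv`), then
`Φ_{[1,3]} = R_{[1,3]} ∘ Ψ_{[1,3]} ∘ C_{[1,3]}` where `R_{[1,3]}` and `C_{[1,3]}` are
isomorphisms. -/
theorem blk13_independent_of_decomposition (K : Type) [Field K]
    (m m' m₂ m₂' : ℕ × ℕ → ℕ)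
    (Φ : RepMor K 3 tauBF m m') (Ψ : RepMor K 3 tauBF m₂ m₂')
    (C : RepMor K 3 tauBF m m₂) (Cinv : RepMor K 3 tauBF m₂ m)
    (R : RepMor K 3 tauBF m₂' m') (Rinv : RepMor K 3 tauBF m' m₂')
    (hC₁ : ∀ v, Cinv.θ v ∘ₗ C.θ v = trunc K 3 m v)
    (hC₂ : ∀ v, C.θ v ∘ₗ Cinv.θ v = trunc K 3 m₂ v)
    (hR₁ : ∀ v, Rinv.θ v ∘ₗ R.θ v = trunc K 3 m₂' v)
    (hR₂ : ∀ v, R.θ v ∘ₗ Rinv.θ v = trunc K 3 m' v)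
    (hΦ : ∀ v, Φ.θ v = R.θ v ∘ₗ Ψ.θ v ∘ₗ C.θ v) :
    ∀ v, 1 ≤ v → v ≤ 3 →
      blk Φ (1, 3) v = blk R (1, 3) v ∘ₗ blk Ψ (1, 3) v ∘ₗ blk C (1, 3) v ∧
      Function.Bijective (blk R (1, 3) v) ∧ Function.Bijective (blk C (1, 3) v) := by
  intro v hv1 hv3
  have hv : intervalMem 3 (1, 3) v := ⟨le_rfl, hv1, hv3, le_rfl⟩
  have hΦ_blk : blk Φ (1, 3) v = blk (R.comp (Ψ.comp C)) (1, 3) v := by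
    simp only [blk, hΦ, RepMor.comp_θ]
  refine ⟨?_, blk_one_three_bijective R Rinv (hR₁ v) (hR₂ v) hv,
    blk_one_three_bijective C Cinv (hC₁ v) (hC₂ v) hv⟩
  rw [hΦ_blk, blk_comp_one_three _ _ hv, blk_comp_one_three _ _ hv]
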